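/- arXiv:2002.10693 — 4 statements merged into one kernel-verified Lean document; each statement's English description precedes it below -/
import Mathlib

section
/- Let $p_0, p_1, p_2, m_1, m_2, \delta_1, \delta_2$ be positive integers (reals suffice) such that $m_i p_i \delta_i - 2 > 0$ for $i = 1, 2$, and define $\varDelta_i = m_i^2 p_i - 2 p_0 (m_i p_i \delta_i - 2)$ for $i = 1, 2$. Then it is impossible that simultaneously $\varDelta_1 > 0$, $\varDelta_2 > 0$, and $\varDelta_1 \varDelta_2 - m_1^2 p_1\, m_2^2 p_2 \ge 0$. -/
/-- Key numerical contradiction in Lemma 6.5 (case `m₀ = 2`, `a₀ = 1`):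
for positive reals `p₀, p₁, p₂, m₁, m₂, δ₁, δ₂` with `mᵢ pᵢ δᵢ - 2 > 0` and
`Δᵢ = mᵢ² pᵢ - 2 p₀ (mᵢ pᵢ δᵢ - 2)`, it is impossible that simultaneously
`Δ₁ > 0`, `Δ₂ > 0` and `Δ₁ Δ₂ - m₁² p₁ m₂² p₂ ≥ 0`. -/
theorem stmt1 (p0 p1 p2 m1 m2 δ1 δ2 Δ1 Δ2 : ℝ)
    (hp0 : 0 < p0) (hp1 : 0 < p1) (hp2 : 0 < p2)
    (hm1 : 0 < m1) (hm2 : 0 < m2) (hδ1 : 0 < δ1) (hδ2 : 0 < δ2)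
    (h1 : 0 < m1 * p1 * δ1 - 2) (h2 : 0 < m2 * p2 * δ2 - 2)
    (hΔ1 : Δ1 = m1 ^ 2 * p1 - 2 * p0 * (m1 * p1 * δ1 - 2))
    (hΔ2 : Δ2 = m2 ^ 2 * p2 - 2 * p0 * (m2 * p2 * δ2 - 2)) :
    ¬ (0 < Δ1 ∧ 0 < Δ2 ∧ 0 ≤ Δ1 * Δ2 - m1 ^ 2 * p1 * (m2 ^ 2 * p2)) := by
  rintro ⟨hd1, hd2, hd12⟩
  subst hΔ1 hΔ2
  nlinarith [mul_pos h1 h2, mul_pos hd1 h2, mul_pos hd2 h1, mul_pos hp0 (mul_pos h1 h2), sq_nonneg (m1*p1*δ1 - m2*p2*δ2)]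
end

section
/- Let $m \ge 5$ be an odd integer and let $\boldsymbol{\mu}_m$ act on $\mathbb{C}[y_2, y_4]$ with weights $\operatorname{wt}(y_2) = m-2$, $\operatorname{wt}(y_4) = 1$. Then for any two invariant polynomials $\phi_1, \phi_2 \in \mathbb{C}[y_2, y_4]^{\boldsymbol{\mu}_m}$, the 2-form $\mathrm{d}\phi_1 \wedge \mathrm{d}\phi_2$ lies in $\bigl((y_2, y_4) y_4 + (y_2, y_4) y_2^{(m-1)/2}\bigr)\, \mathrm{d} y_2 \wedge \mathrm{d} y_4$, where $(y_2, y_4)$ denotes the maximal ideal generated by $y_2$ and $y_4$. -/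
/-!
Invariance under `μ_m` says exactly that every exponent `(a, b)` in the support satisfies
`m ∣ (m - 2) a + b`. The Jacobian is bilinear, and for monomials `∂₀(y^u) ∂₁(y^v)` is a multiple of
`y₂^(u₀+v₀-1) y₄^(u₁+v₁-1)`, vanishing unless `u₀, v₁ ≥ 1`. Such a monomial could only escape the
ideal if its `y₄`-degree were `0`, or `1` with `y₂`-degree `0`. In the first case `u₁ = 0`, so
`m ∣ 2u₀`, hence `m ∣ u₀` since `m` is odd, and the `y₂`-degree is at least `m - 1`; in the second
`u₀ = 1` and `v₀ = 0`, so `m ∣ v₁` and the `y₄`-degree is at least `m - 1`.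
-/

open MvPolynomial

section

variable {R σ : Type*} [CommRing R]

lemma aeval_C_pow_mul_X_monomial (ζ : R) (w : σ → ℕ) (s : σ →₀ ℕ) (a : R) :
    aeval (fun i => C (ζ ^ w i) * X i) (monomial s a)
      = monomial s (ζ ^ Finsupp.weight w s * a) := by
  rw [aeval_monomial, monomial_eq, algebraMap_eq, Finsupp.weight_apply, Finsupp.prod,
    Finsupp.prod, Finsupp.sum]
  simp only [mul_pow, Finset.prod_mul_distrib, ← map_pow, ← map_prod, ← pow_mul,
    Finset.prod_pow_eq_pow_sum, smul_eq_mul, map_mul, mul_comm (w _)]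
  ring

lemma coeff_aeval_C_pow_mul_X (ζ : R) (w : σ → ℕ) (φ : MvPolynomial σ R) (d : σ →₀ ℕ) :
    coeff d (aeval (fun i => C (ζ ^ w i) * X i) φ) = ζ ^ Finsupp.weight w d * coeff d φ := by
  classical
  induction φ using MvPolynomial.induction_on' with
  | monomial s a =>
    rw [aeval_C_pow_mul_X_monomial, coeff_monomial, coeff_monomial]
    split_ifs with h
    · rw [h]
    · rw [mul_zero]
  | add p q hp hq => rw [map_add, coeff_add, coeff_add, hp, hq, mul_add]

lemma dvd_weight_of_aeval_eq_self [IsDomain R] {m : ℕ} {ζ : R} (hζ : IsPrimitiveRoot ζ m)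
    (w : σ → ℕ) {φ : MvPolynomial σ R} (h : aeval (fun i => C (ζ ^ w i) * X i) φ = φ)
    {d : σ →₀ ℕ} (hd : d ∈ φ.support) : m ∣ Finsupp.weight w d := by
  rw [← hζ.pow_eq_one_iff_dvd, ← mul_eq_right₀ (mem_support_iff.mp hd),
    ← coeff_aeval_C_pow_mul_X, h]

lemma pderiv_mul_pderiv_mem_of_forall_support {I : Ideal (MvPolynomial σ R)} (i j : σ)
    {φ ψ : MvPolynomial σ R}
    (h : ∀ u ∈ φ.support, ∀ v ∈ ψ.support,
      pderiv i (monomial u 1) * pderiv j (monomial v 1) ∈ I) :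
    pderiv i φ * pderiv j ψ ∈ I := by
  rw [φ.as_sum, ψ.as_sum, map_sum, map_sum, Finset.sum_mul_sum]
  refine Ideal.sum_mem _ fun u hu => Ideal.sum_mem _ fun v hv => ?_
  rw [← mul_one (coeff u φ), ← mul_one (coeff v ψ), ← C_mul_monomial, ← C_mul_monomial,
    pderiv_C_mul, pderiv_C_mul, mul_mul_mul_comm]
  exact I.mul_mem_left _ (h u hu v hv)

variable (R) in
/-- The ideal `(y₂, y₄)·y₄ + (y₂, y₄)·y₂^((m-1)/2)`, where `y₂ = X 0` and `y₄ = X 1`. -/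
noncomputable def icIdeal (m : ℕ) : Ideal (MvPolynomial (Fin 2) R) :=
  Ideal.span {X 0 * X 1, X 1 ^ 2, X 0 ^ ((m - 1) / 2) * X 1, X 0 ^ ((m + 1) / 2)}

lemma monomial_mem_icIdeal {m : ℕ} {d : Fin 2 →₀ ℕ}
    (hd : 2 ≤ d 1 ∨ (1 ≤ d 0 ∧ 1 ≤ d 1) ∨ (m + 1) / 2 ≤ d 0) (c : R) :
    monomial d c ∈ icIdeal R m := by
  rw [icIdeal, monomial_eq, Finsupp.prod_fintype _ _ (fun _ => pow_zero _), Fin.prod_univ_two]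
  rcases hd with h | ⟨h0, h1⟩ | h
  · refine Ideal.mem_of_dvd _ (a := X 1 ^ 2) (((pow_dvd_pow _ h).mul_left _).mul_left _)
      (Ideal.subset_span ?_)
    simp
  · refine Ideal.mem_of_dvd _ (a := X 0 * X 1)
      ((mul_dvd_mul (dvd_pow_self _ (by omega)) (dvd_pow_self _ (by omega))).mul_left _)
      (Ideal.subset_span ?_)
    simp
  · refine Ideal.mem_of_dvd _ (a := X 0 ^ ((m + 1) / 2))
      (((pow_dvd_pow _ h).mul_right _).mul_left _) (Ideal.subset_span ?_)
    simp

lemma exponent_bounds_of_dvd {m u₀ u₁ v₀ v₁ : ℕ} (hm : 3 ≤ m) (hodd : Odd m) (hu₀ : 1 ≤ u₀)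
    (hv₁ : 1 ≤ v₁) (hu : m ∣ (m - 2) * u₀ + u₁) (hv : m ∣ (m - 2) * v₀ + v₁) :
    2 ≤ u₁ + v₁ - 1 ∨ (1 ≤ u₀ + v₀ - 1 ∧ 1 ≤ u₁ + v₁ - 1) ∨ (m + 1) / 2 ≤ u₀ + v₀ - 1 := by
  have hv₀ : 1 ≤ v₀ ∨ m ≤ v₁ := by
    rcases Nat.eq_zero_or_pos v₀ with rfl | h
    · rw [mul_zero, zero_add] at hv
      exact Or.inr (Nat.le_of_dvd hv₁ hv)
    · exact Or.inl h
  have hu₁ : 1 ≤ u₁ ∨ m ≤ u₀ := by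
    rcases Nat.eq_zero_or_pos u₁ with rfl | h
    · rw [add_zero] at hu
      have h2 : m ∣ (m - 2) * u₀ + 2 * u₀ :=
        ⟨u₀, by rw [← add_mul, Nat.sub_add_cancel (by omega)]⟩
      have hmu : m ∣ u₀ :=
        hodd.coprime_two_right.dvd_of_dvd_mul_left ((Nat.dvd_add_right hu).mp h2)
      exact Or.inr (Nat.le_of_dvd hu₀ hmu)
    · exact Or.inl h
  omega

lemma pderiv_zero_mul_pderiv_one_mem_icIdeal {m : ℕ} (hm : 3 ≤ m) (hodd : Odd m)
    {φ ψ : MvPolynomial (Fin 2) R} (hφ : ∀ d ∈ φ.support, m ∣ (m - 2) * d 0 + d 1)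
    (hψ : ∀ d ∈ ψ.support, m ∣ (m - 2) * d 0 + d 1) :
    pderiv 0 φ * pderiv 1 ψ ∈ icIdeal R m := by
  refine pderiv_mul_pderiv_mem_of_forall_support 0 1 fun u hu v hv => ?_
  rw [pderiv_monomial, pderiv_monomial, monomial_mul]
  rcases Nat.eq_zero_or_pos (u 0) with hu₀ | hu₀
  · simp [hu₀]
  rcases Nat.eq_zero_or_pos (v 1) with hv₁ | hv₁
  · simp [hv₁]
  refine monomial_mem_icIdeal ?_ _
  simp only [Finsupp.add_apply, Finsupp.tsub_apply, Finsupp.single_eq_same,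
    Finsupp.single_eq_of_ne (show (0 : Fin 2) ≠ 1 by decide),
    Finsupp.single_eq_of_ne (show (1 : Fin 2) ≠ 0 by decide)]
  have hbounds := exponent_bounds_of_dvd hm hodd hu₀ hv₁ (hφ u hu) (hψ v hv)
  omega

end

/-- Case IC: for odd `m ≥ 5` and the `μ_m`-action on `ℂ[y₂, y₄]` with weights
`(m-2, 1)`, for any two invariant polynomials `φ₁, φ₂`, the coefficient of
`dφ₁ ∧ dφ₂` against `dy₂ ∧ dy₄` (the Jacobian determinant) lies in the ideal
`(y₂, y₄)·y₄ + (y₂, y₄)·y₂^((m-1)/2)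
  = (y₂ y₄, y₄², y₂^((m-1)/2) y₄, y₂^((m+1)/2))`.
Here `X 0 = y₂`, `X 1 = y₄`. -/
theorem stmt5 (m : ℕ) (hm : 5 ≤ m) (hodd : Odd m)
    (ζ : ℂ) (hζ : IsPrimitiveRoot ζ m)
    (φ1 φ2 : MvPolynomial (Fin 2) ℂ)
    (h1 : MvPolynomial.aeval
        (fun i : Fin 2 =>
          (MvPolynomial.C (ζ ^ (if i = 0 then m - 2 else 1)) *
            MvPolynomial.X i : MvPolynomial (Fin 2) ℂ)) φ1 = φ1)
    (h2 : MvPolynomial.aeval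
        (fun i : Fin 2 =>
          (MvPolynomial.C (ζ ^ (if i = 0 then m - 2 else 1)) *
            MvPolynomial.X i : MvPolynomial (Fin 2) ℂ)) φ2 = φ2) :
    MvPolynomial.pderiv 0 φ1 * MvPolynomial.pderiv 1 φ2 -
      MvPolynomial.pderiv 1 φ1 * MvPolynomial.pderiv 0 φ2 ∈
    Ideal.span ({MvPolynomial.X 0 * MvPolynomial.X 1, MvPolynomial.X 1 ^ 2,
      MvPolynomial.X 0 ^ ((m - 1) / 2) * MvPolynomial.X 1,
      MvPolynomial.X 0 ^ ((m + 1) / 2)} : Set (MvPolynomial (Fin 2) ℂ)) := by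
  have hweight : ∀ φ : MvPolynomial (Fin 2) ℂ,
      aeval (fun i : Fin 2 => C (ζ ^ (if i = 0 then m - 2 else 1)) * X i) φ = φ →
        ∀ d ∈ φ.support, m ∣ (m - 2) * d 0 + d 1 := fun φ hφ d hd => by
    simpa [Finsupp.weight_apply, Finsupp.sum_fintype, Fin.sum_univ_two, mul_comm]
      using dvd_weight_of_aeval_eq_self hζ _ hφ hd
  have hm' : 3 ≤ m := by omega
  refine sub_mem (pderiv_zero_mul_pderiv_one_mem_icIdeal hm' hodd (hweight _ h1) (hweight _ h2)) ?_
  rw [mul_comm (pderiv 1 φ1)]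
  exact pderiv_zero_mul_pderiv_one_mem_icIdeal hm' hodd (hweight _ h2) (hweight _ h1)
end

section
/- Let $m \ge 3$ be an odd integer and let $\boldsymbol{\mu}_m$ act on $\mathbb{C}[y_2, y_3]$ with weights $\operatorname{wt}(y_2) = \frac{m+1}{2}$, $\operatorname{wt}(y_3) = -1$ (mod $m$). Then for any invariant polynomials $\phi_1, \phi_2$, the form $\mathrm{d}\phi_1 \wedge \mathrm{d}\phi_2$ lies in $\bigl((y_2, y_3) y_2 + (y_2, y_3) y_3^{(m-1)/2}\bigr)\, \mathrm{d} y_2 \wedge \mathrm{d} y_3$. -/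
/-!
The diagonal action scales the monomial `y₂^a y₃^b` by `ζ^((m+1)/2 · a + (m-1) · b)`, so every
monomial of an invariant polynomial has weight divisible by `m`. It therefore suffices to show that
`∂₂(y^s) · ∂₃(y^t)` lies in `(y₂², y₂y₃, y₃^((m+1)/2))` for invariant exponents `s = (a, b)`,
`t = (c, d)`; then both terms of the Jacobian do, separately. That product is a multiple of
`y₂^(a-1+c) y₃^(b+d-1)`, which is in the ideal unless `c = 0` or `(a, b) = (1, 0)`. If `c = 0` then
`m ∣ (m-1) d`, so `d ≥ m`; and `y₂` is not invariant because `m ∤ (m+1)/2`.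
-/

open MvPolynomial

section Diagonal

variable {σ R : Type*} [CommSemiring R]

theorem aeval_C_mul_X_monomial (c : σ → R) (s : σ →₀ ℕ) (a : R) :
    aeval (fun i => C (c i) * X i) (monomial s a)
      = monomial s (a * s.prod fun i e => c i ^ e) := by
  rw [aeval_monomial, monomial_eq, algebraMap_eq, map_mul, map_finsuppProd]
  simp only [mul_pow, Finsupp.prod_mul, map_pow]
  ring

theorem coeff_aeval_C_mul_X (c : σ → R) (φ : MvPolynomial σ R) (n : σ →₀ ℕ) :
    coeff n (aeval (fun i => C (c i) * X i) φ) = coeff n φ * n.prod fun i e => c i ^ e := by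
  induction φ using MvPolynomial.induction_on' with
  | add p q hp hq => simp only [map_add, coeff_add, hp, hq, add_mul]
  | monomial s a =>
    classical
    rw [aeval_C_mul_X_monomial, coeff_monomial, coeff_monomial]
    split_ifs with h
    · rw [h]
    · rw [zero_mul]

theorem prod_pow_eq_one_of_aeval_C_mul_X_eq_self [IsDomain R] {c : σ → R}
    {φ : MvPolynomial σ R} (hφ : aeval (fun i => C (c i) * X i) φ = φ) {n : σ →₀ ℕ}
    (hn : n ∈ φ.support) : (n.prod fun i e => c i ^ e) = 1 :=
  (mul_eq_left₀ (mem_support_iff.mp hn)).mp (by rw [← coeff_aeval_C_mul_X, hφ])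

theorem IsPrimitiveRoot.dvd_sum_mul_of_aeval_eq_self [Fintype σ] [IsDomain R] {ζ : R} {m : ℕ}
    (hζ : IsPrimitiveRoot ζ m) {w : σ → ℕ} {φ : MvPolynomial σ R}
    (hφ : aeval (fun i => C (ζ ^ w i) * X i) φ = φ) {n : σ →₀ ℕ} (hn : n ∈ φ.support) :
    m ∣ ∑ i, w i * n i := by
  have h := prod_pow_eq_one_of_aeval_C_mul_X_eq_self hφ hn
  rw [Finsupp.prod_fintype _ _ fun _ => pow_zero _] at h
  simp only [← pow_mul, Finset.prod_pow_eq_pow_sum] at h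
  exact hζ.pow_eq_one_iff_dvd _ |>.mp h

theorem monomial_mem_of_le {I : Ideal (MvPolynomial σ R)} {e u : σ →₀ ℕ}
    (he : monomial e 1 ∈ I) (hle : e ≤ u) (c : R) : monomial u c ∈ I :=
  I.mem_of_dvd (monomial_dvd_monomial.mpr ⟨Or.inr hle, one_dvd c⟩) he

end Diagonal

theorem k3a_exponent_of_dvd_weight {m a b c d : ℕ} (hm : 3 ≤ m)
    (hab : m ∣ (m + 1) / 2 * a + (m - 1) * b) (hcd : m ∣ (m + 1) / 2 * c + (m - 1) * d)
    (ha : a ≠ 0) (hd : d ≠ 0) :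
    2 ≤ a - 1 + c ∨ (1 ≤ a - 1 + c ∧ 1 ≤ b + (d - 1)) ∨ (m + 1) / 2 ≤ b + (d - 1) := by
  by_cases hc : c = 0
  · have hmd : m ∣ d := by
      rw [hc, mul_zero, zero_add] at hcd
      have hcop : m.Coprime (m - 1) := (Nat.coprime_self_sub_right (by omega)).mpr m.coprime_one_right
      exact hcop.dvd_of_dvd_mul_left hcd
    have := Nat.le_of_dvd (Nat.pos_of_ne_zero hd) hmd
    omega
  · by_cases h : a = 1 ∧ b = 0
    · rw [h.1, h.2, mul_zero, add_zero, mul_one] at hab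
      have := Nat.le_of_dvd (by omega) hab
      omega
    · omega

section K3A

variable (R : Type*) [CommSemiring R]

noncomputable def k3aIdeal (m : ℕ) : Ideal (MvPolynomial (Fin 2) R) :=
  Ideal.span {X 0 ^ 2, X 0 * X 1, X 0 * X 1 ^ ((m - 1) / 2), X 1 ^ ((m + 1) / 2)}

variable {R}

theorem monomial_mem_k3aIdeal {m : ℕ} {u : Fin 2 →₀ ℕ}
    (h : 2 ≤ u 0 ∨ (1 ≤ u 0 ∧ 1 ≤ u 1) ∨ (m + 1) / 2 ≤ u 1) (c : R) :
    monomial u c ∈ k3aIdeal R m := by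
  rcases h with h | h | h
  · refine monomial_mem_of_le (e := Finsupp.single 0 2) ?_ ?_ c
    · rw [← X_pow_eq_monomial]
      exact Ideal.subset_span (by simp)
    · simp [Finsupp.le_def, Fin.forall_fin_two, h]
  · refine monomial_mem_of_le (e := Finsupp.single 0 1 + Finsupp.single 1 1) ?_ ?_ c
    · rw [← mul_one (1 : R), ← monomial_mul (R := R)]
      exact Ideal.subset_span (by simp [X])
    · simp [Finsupp.le_def, Fin.forall_fin_two, h]
  · refine monomial_mem_of_le (e := Finsupp.single 1 ((m + 1) / 2)) ?_ ?_ c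
    · rw [← X_pow_eq_monomial]
      exact Ideal.subset_span (by simp)
    · simp [Finsupp.le_def, Fin.forall_fin_two, h]

theorem pderiv_monomial_mul_pderiv_monomial_mem_k3aIdeal {m : ℕ} (hm : 3 ≤ m)
    {s t : Fin 2 →₀ ℕ} (hs : m ∣ (m + 1) / 2 * s 0 + (m - 1) * s 1)
    (ht : m ∣ (m + 1) / 2 * t 0 + (m - 1) * t 1) (a b : R) :
    pderiv 0 (monomial s a) * pderiv 1 (monomial t b) ∈ k3aIdeal R m := by
  rw [pderiv_monomial, pderiv_monomial, monomial_mul]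
  rcases eq_or_ne (s 0) 0 with hs0 | hs0
  · simp [hs0]
  rcases eq_or_ne (t 1) 0 with ht1 | ht1
  · simp [ht1]
  refine monomial_mem_k3aIdeal ?_ _
  simpa [Finsupp.single_apply] using k3a_exponent_of_dvd_weight hm hs ht hs0 ht1

theorem pderiv_mul_pderiv_mem_k3aIdeal {m : ℕ} (hm : 3 ≤ m) {φ ψ : MvPolynomial (Fin 2) R}
    (hφ : ∀ s ∈ φ.support, m ∣ (m + 1) / 2 * s 0 + (m - 1) * s 1)
    (hψ : ∀ t ∈ ψ.support, m ∣ (m + 1) / 2 * t 0 + (m - 1) * t 1) :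
    pderiv 0 φ * pderiv 1 ψ ∈ k3aIdeal R m := by
  rw [← support_sum_monomial_coeff φ, ← support_sum_monomial_coeff ψ, map_sum, map_sum,
    Finset.sum_mul_sum]
  exact Ideal.sum_mem _ fun s hs => Ideal.sum_mem _ fun t ht =>
    pderiv_monomial_mul_pderiv_monomial_mem_k3aIdeal hm (hφ s hs) (hψ t ht) _ _

end K3A

theorem stmt6_general (m : ℕ) (hm : 3 ≤ m)
    (ζ : ℂ) (hζ : IsPrimitiveRoot ζ m)
    (φ1 φ2 : MvPolynomial (Fin 2) ℂ)
    (h1 : MvPolynomial.aeval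
        (fun i : Fin 2 =>
          (MvPolynomial.C (ζ ^ (if i = 0 then (m + 1) / 2 else m - 1)) *
            MvPolynomial.X i : MvPolynomial (Fin 2) ℂ)) φ1 = φ1)
    (h2 : MvPolynomial.aeval
        (fun i : Fin 2 =>
          (MvPolynomial.C (ζ ^ (if i = 0 then (m + 1) / 2 else m - 1)) *
            MvPolynomial.X i : MvPolynomial (Fin 2) ℂ)) φ2 = φ2) :
    MvPolynomial.pderiv 0 φ1 * MvPolynomial.pderiv 1 φ2 -
      MvPolynomial.pderiv 1 φ1 * MvPolynomial.pderiv 0 φ2 ∈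
    Ideal.span ({MvPolynomial.X 0 ^ 2, MvPolynomial.X 0 * MvPolynomial.X 1,
      MvPolynomial.X 0 * MvPolynomial.X 1 ^ ((m - 1) / 2),
      MvPolynomial.X 1 ^ ((m + 1) / 2)} : Set (MvPolynomial (Fin 2) ℂ)) := by
  have hs1 : ∀ s ∈ φ1.support, m ∣ (m + 1) / 2 * s 0 + (m - 1) * s 1 := fun s hs => by
    simpa using hζ.dvd_sum_mul_of_aeval_eq_self h1 hs
  have hs2 : ∀ s ∈ φ2.support, m ∣ (m + 1) / 2 * s 0 + (m - 1) * s 1 := fun s hs => by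
    simpa using hζ.dvd_sum_mul_of_aeval_eq_self h2 hs
  refine sub_mem (pderiv_mul_pderiv_mem_k3aIdeal hm hs1 hs2) ?_
  rw [mul_comm (pderiv 1 φ1)]
  exact pderiv_mul_pderiv_mem_k3aIdeal hm hs2 hs1

/-- Case k3A: for odd `m ≥ 3` and the `μ_m`-action on `ℂ[y₂, y₃]` with weights
`((m+1)/2, -1 ≡ m-1)`, for any invariant polynomials `φ₁, φ₂`, the Jacobian
determinant of `(φ₁, φ₂)` lies in the ideal
`(y₂, y₃)·y₂ + (y₂, y₃)·y₃^((m-1)/2)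
  = (y₂², y₂ y₃, y₂ y₃^((m-1)/2), y₃^((m+1)/2))`.
Here `X 0 = y₂`, `X 1 = y₃`. -/
theorem stmt6 (m : ℕ) (hm : 3 ≤ m) (hodd : Odd m)
    (ζ : ℂ) (hζ : IsPrimitiveRoot ζ m)
    (φ1 φ2 : MvPolynomial (Fin 2) ℂ)
    (h1 : MvPolynomial.aeval
        (fun i : Fin 2 =>
          (MvPolynomial.C (ζ ^ (if i = 0 then (m + 1) / 2 else m - 1)) *
            MvPolynomial.X i : MvPolynomial (Fin 2) ℂ)) φ1 = φ1)
    (h2 : MvPolynomial.aeval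
        (fun i : Fin 2 =>
          (MvPolynomial.C (ζ ^ (if i = 0 then (m + 1) / 2 else m - 1)) *
            MvPolynomial.X i : MvPolynomial (Fin 2) ℂ)) φ2 = φ2) :
    MvPolynomial.pderiv 0 φ1 * MvPolynomial.pderiv 1 φ2 -
      MvPolynomial.pderiv 1 φ1 * MvPolynomial.pderiv 0 φ2 ∈
    Ideal.span ({MvPolynomial.X 0 ^ 2, MvPolynomial.X 0 * MvPolynomial.X 1,
      MvPolynomial.X 0 * MvPolynomial.X 1 ^ ((m - 1) / 2),
      MvPolynomial.X 1 ^ ((m + 1) / 2)} : Set (MvPolynomial (Fin 2) ℂ)) :=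
  stmt6_general m hm ζ hζ φ1 φ2 h1 h2
end

section
/- Let $m$ be odd with $\gcd(a, m) = 1$ and $m/2 < a < m$, and let $\boldsymbol{\mu}_m$ act on $\mathbb{C}[y_1, y_2, y_3, y_4]$ with weights $(1, a, -1, 0)$. Let $S^\sharp \subset \mathbb{C}^4$ be defined by two equations $\alpha = y_1 y_3 - \alpha_1 = 0$ (with $\alpha$ invariant) and $\gamma = y_1^{2a-m} + y_2^2 + y_3^{2m-2a} + (\text{higher order invariant-weight terms}) = 0$ with $\operatorname{wt}(\gamma) \equiv 2a \pmod m$. Then $y_1^a$, restricted to $S^\sharp$, belongs to the ideal $(\mathfrak{m}_{S^\sharp})_{\operatorname{wt}=0} \cdot (\mathcal{O}_{S^\sharp})_{\operatorname{wt}=a}$ generated by products of weight-0 elements of the maximal ideal with weight-$a$ elements. -/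
open MvPolynomial

private lemma aux_deg (n : ℕ) :
    ∀ p : MvPolynomial (Fin 4) ℂ,
      p ∈ (Ideal.span {X 0, X 1, X 2, X 3} : Ideal (MvPolynomial (Fin 4) ℂ)) ^ n →
      ∀ d ∈ p.support, n ≤ d 0 + d 1 + d 2 + d 3 := by
  induction n with
  | zero => intro p _ d _; exact Nat.zero_le _
  | succ n ih =>
    intro p hp
    rw [pow_succ] at hp
    refine Submodule.mul_induction_on hp ?_ ?_
    · intro x hx y hy d hd
      have hy0 : constantCoeff y = 0 := by
        have hsub : (Ideal.span {X 0, X 1, X 2, X 3} : Ideal (MvPolynomial (Fin 4) ℂ)) ≤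
            RingHom.ker constantCoeff := by
          rw [Ideal.span_le]
          intro q hq
          simp only [Set.mem_insert_iff, Set.mem_singleton_iff] at hq
          rcases hq with rfl | rfl | rfl | rfl <;> simp [RingHom.mem_ker]
        exact hsub hy
      obtain ⟨dx, hdx, dy, hdy, rfl⟩ := Finset.mem_add.mp (support_mul x y hd)
      have h1 : n ≤ dx 0 + dx 1 + dx 2 + dx 3 := ih x hx dx hdx
      have h2 : dy ≠ 0 := by
        rintro rfl
        rw [mem_support_iff] at hdy
        exact hdy hy0
      have h3 : 1 ≤ dy 0 + dy 1 + dy 2 + dy 3 := by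
        by_contra hc
        push_neg at hc
        apply h2
        ext i
        fin_cases i <;> simp <;> omega
      simp only [Finsupp.add_apply]
      omega
    · intro x y hx hy d hd
      rcases Finset.mem_union.mp (support_add hd) with h | h
      exacts [hx d h, hy d h]

/-- Final step of Lemma 5.13 (lemma:new-zero): with `m` odd, `m/2 < a < m`,
`gcd(a, m) = 1`, `μ_m` acting on `ℂ[y₁, y₂, y₃, y₄]` with weights
`(1, a, -1, 0)`, and `S♯ = {α = γ = 0}` where `α = y₁y₃ - α₁` is invariant
with `α₁ ∈ (y₂, y₃)² + (y₄)` and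
`γ = y₁^(2a-m) + y₂² + y₃^(2m-2a) + (higher order)` is semi-invariant of
weight `2a`, the restriction of `y₁^a` to `S♯` lies in
`(𝔪_{S♯})_{wt=0} · (𝒪_{S♯})_{wt=a}`: modulo the ideal `(α, γ)`, the element
`y₁^a` is in the span of products `g·h` with `g` an invariant in the maximal
ideal and `h` a semi-invariant of weight `a`. Here `X 0, X 1, X 2, X 3` are
`y₁, y₂, y₃, y₄` and the action is `X i ↦ ζ^(wt i) X i`. -/
theorem stmt14 (m a : ℕ) (hodd : Odd m) (ha1 : m < 2 * a) (ha2 : a < m)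
    (hgcd : Nat.gcd a m = 1)
    (ζ : ℂ) (hζ : IsPrimitiveRoot ζ m)
    (σ : MvPolynomial (Fin 4) ℂ →ₐ[ℂ] MvPolynomial (Fin 4) ℂ)
    (hσ : σ = MvPolynomial.aeval (fun i : Fin 4 =>
      (MvPolynomial.C (ζ ^ (![1, a, m - 1, 0] i)) *
        MvPolynomial.X i : MvPolynomial (Fin 4) ℂ)))
    (α α₁ γ δ : MvPolynomial (Fin 4) ℂ)
    (hαform : α = MvPolynomial.X 0 * MvPolynomial.X 2 - α₁)
    (hα₁ : α₁ ∈ (Ideal.span {MvPolynomial.X 1, MvPolynomial.X 2}) ^ 2 ⊔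
      Ideal.span {(MvPolynomial.X 3 : MvPolynomial (Fin 4) ℂ)})
    (hαinv : σ α = α)
    (hγform : γ = MvPolynomial.X 0 ^ (2 * a - m) + MvPolynomial.X 1 ^ 2 +
      MvPolynomial.X 2 ^ (2 * m - 2 * a) + δ)
    (hδ : δ ∈ (Ideal.span {MvPolynomial.X 0, MvPolynomial.X 1,
      MvPolynomial.X 2, MvPolynomial.X 3}) ^ (2 * a - m + 1))
    (hγwt : σ γ = MvPolynomial.C (ζ ^ (2 * a)) * γ) :
    (MvPolynomial.X 0 : MvPolynomial (Fin 4) ℂ) ^ a ∈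
      (Ideal.span ({α, γ} : Set (MvPolynomial (Fin 4) ℂ))).restrictScalars ℂ ⊔
      Submodule.span ℂ {f : MvPolynomial (Fin 4) ℂ | ∃ g h,
        f = g * h ∧ σ g = g ∧ MvPolynomial.constantCoeff g = 0 ∧
        σ h = MvPolynomial.C (ζ ^ a) * h} := by
  have hm0 : 0 < m := by omega
  have hm1 : 1 ≤ m := hm0
  have hζ1 : ζ ^ m = 1 := hζ.pow_eq_one
  have hζmod : ∀ x : ℕ, ζ ^ x = ζ ^ (x % m) := by
    intro x
    conv_lhs => rw [← Nat.div_add_mod x m]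
    rw [pow_add, pow_mul, hζ1, one_pow, one_mul]
  have hzeq : ∀ x y : ℕ, ((x : ZMod m) = (y : ZMod m)) → ζ ^ x = ζ ^ y := by
    intro x y hxy
    have h := (ZMod.natCast_eq_natCast_iff _ _ _).mp hxy
    rw [hζmod x, hζmod y, h]
  have hzrev : ∀ x y : ℕ, ζ ^ x = ζ ^ y → ((x : ZMod m) = (y : ZMod m)) := by
    intro x y hxy
    refine (ZMod.natCast_eq_natCast_iff _ _ _).mpr ?_
    exact hζ.pow_inj (Nat.mod_lt _ hm0) (Nat.mod_lt _ hm0)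
      (by rw [← hζmod x, ← hζmod y, hxy])
  have hmz : ((m : ZMod m)) = 0 := ZMod.natCast_self m
  have hσ0 : σ (X 0) = C ζ * X 0 := by rw [hσ]; simp
  have hσ1 : σ (X 1) = C (ζ ^ a) * X 1 := by rw [hσ]; simp
  have hσ2 : σ (X 2) = C (ζ ^ (m - 1)) * X 2 := by rw [hσ]; simp
  have hσ3 : σ (X 3) = X 3 := by rw [hσ]; simp
  have hσC : ∀ c : ℂ, σ (C c) = C c := by
    intro c; rw [hσ]; simp [algebraMap_eq]
  have hCpow : ∀ (z : ℂ) (i : ℕ) (p : MvPolynomial (Fin 4) ℂ),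
      (C z * p) ^ i = C (z ^ i) * p ^ i := by
    intro z i p; rw [mul_pow, ← map_pow]
  have hσm : ∀ i j k l : ℕ, σ (X 0 ^ i * X 1 ^ j * X 2 ^ k * X 3 ^ l)
      = C (ζ ^ (i + a * j + (m - 1) * k)) * (X 0 ^ i * X 1 ^ j * X 2 ^ k * X 3 ^ l) := by
    intro i j k l
    rw [map_mul, map_mul, map_mul, map_pow, map_pow, map_pow, map_pow,
      hσ0, hσ1, hσ2, hσ3, hCpow, hCpow, hCpow, ← pow_mul, ← pow_mul,
      pow_add, pow_add, map_mul, map_mul]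
    ring
  have hmonX : ∀ d : Fin 4 →₀ ℕ,
      (monomial d (1 : ℂ)) = X 0 ^ d 0 * X 1 ^ d 1 * X 2 ^ d 2 * X 3 ^ d 3 := by
    intro d
    rw [monomial_eq, Finsupp.prod_fintype _ _ (fun i => pow_zero _), Fin.prod_univ_four]
    simp
  have hσmon : ∀ (d : Fin 4 →₀ ℕ) (c : ℂ), σ (monomial d c)
      = C (ζ ^ (d 0 + a * d 1 + (m - 1) * d 2)) * monomial d c := by
    intro d c
    have h1 : monomial d c = C c * monomial d 1 := by rw [C_mul_monomial, mul_one]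
    rw [h1, map_mul, hσC, hmonX, hσm]
    ring
  have hσcoeff : ∀ (p : MvPolynomial (Fin 4) ℂ) (d : Fin 4 →₀ ℕ),
      coeff d (σ p) = ζ ^ (d 0 + a * d 1 + (m - 1) * d 2) * coeff d p := by
    intro p d
    conv_lhs => rw [p.as_sum, map_sum]
    rw [coeff_sum]
    simp only [hσmon, coeff_C_mul, coeff_monomial, mul_ite, mul_zero]
    rw [Finset.sum_ite_eq' p.support d]
    by_cases hd : d ∈ p.support
    · simp [hd]
    · simp [hd, notMem_support_iff.mp hd]
  -- semi-invariance of δ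
  have hδeq : δ = γ - X 0 ^ (2 * a - m) - X 1 ^ 2 - X 2 ^ (2 * m - 2 * a) := by
    rw [hγform]; ring
  have e0 : ζ ^ (2 * a - m) = ζ ^ (2 * a) := by
    refine hzeq _ _ ?_
    push_cast [Nat.cast_sub (by omega : m ≤ 2 * a)]
    rw [hmz]; ring
  have e2 : ζ ^ ((m - 1) * (2 * m - 2 * a)) = ζ ^ (2 * a) := by
    refine hzeq _ _ ?_
    push_cast [Nat.cast_sub hm1, Nat.cast_sub (by omega : 2 * a ≤ 2 * m)]
    rw [hmz]; ring
  have hσδ : σ δ = C (ζ ^ (2 * a)) * δ := by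
    have s0 : σ (X 0 ^ (2 * a - m) : MvPolynomial (Fin 4) ℂ)
        = C (ζ ^ (2 * a)) * X 0 ^ (2 * a - m) := by
      rw [map_pow, hσ0, hCpow, e0]
    have s1 : σ (X 1 ^ 2 : MvPolynomial (Fin 4) ℂ) = C (ζ ^ (2 * a)) * X 1 ^ 2 := by
      rw [map_pow, hσ1, hCpow, ← pow_mul, show a * 2 = 2 * a by ring]
    have s2 : σ (X 2 ^ (2 * m - 2 * a) : MvPolynomial (Fin 4) ℂ)
        = C (ζ ^ (2 * a)) * X 2 ^ (2 * m - 2 * a) := by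
      rw [map_pow, hσ2, hCpow, ← pow_mul, e2]
    rw [hδeq, map_sub, map_sub, map_sub, hγwt, s0, s1, s2]
    ring
  have hδwtd : ∀ d ∈ δ.support,
      ((d 0 + a * d 1 + (m - 1) * d 2 : ℕ) : ZMod m) = ((2 * a : ℕ) : ZMod m) := by
    intro d hd
    refine hzrev _ _ ?_
    have h1 := hσcoeff δ d
    rw [hσδ, coeff_C_mul] at h1
    exact (mul_right_cancel₀ (mem_support_iff.mp hd) h1.symm)
  -- decomposition
  obtain ⟨b, hab⟩ : ∃ b, m = a + b := ⟨m - a, by omega⟩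
  have hb1 : 1 ≤ b := by omega
  have habz : ((a : ZMod m)) + (b : ZMod m) = 0 := by
    have := congrArg (Nat.cast : ℕ → ZMod m) hab
    push_cast at this
    rw [hmz] at this
    linear_combination -this
  have hinvm : ∀ i j k l : ℕ, ζ ^ (i + a * j + (m - 1) * k) = 1 →
      σ (X 0 ^ i * X 1 ^ j * X 2 ^ k * X 3 ^ l) = X 0 ^ i * X 1 ^ j * X 2 ^ k * X 3 ^ l := by
    intro i j k l h
    rw [hσm, h, map_one, one_mul]
  have hwta : ∀ i j k l : ℕ, ζ ^ (i + a * j + (m - 1) * k) = ζ ^ a →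
      σ (X 0 ^ i * X 1 ^ j * X 2 ^ k * X 3 ^ l)
        = C (ζ ^ a) * (X 0 ^ i * X 1 ^ j * X 2 ^ k * X 3 ^ l) := by
    intro i j k l h
    rw [hσm, h]
  have hdec : X 0 ^ b * γ = X 0 ^ a + X 0 ^ b * X 1 ^ 2
      + (X 0 ^ b * X 2 ^ b) * X 2 ^ b + X 0 ^ b * δ := by
    rw [hγform, mul_add, mul_add, mul_add, ← pow_add,
      show b + (2 * a - m) = a by omega, show 2 * m - 2 * a = b + b by omega, pow_add]
    ring
  have hmain : (X 0 : MvPolynomial (Fin 4) ℂ) ^ a =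
      X 0 ^ b * γ - X 0 ^ b * X 1 ^ 2 - (X 0 ^ b * X 2 ^ b) * X 2 ^ b - X 0 ^ b * δ := by
    rw [hdec]; ring
  rw [hmain]
  refine sub_mem (sub_mem (sub_mem ?_ ?_) ?_) ?_
  · refine Submodule.mem_sup_left ?_
    rw [Submodule.restrictScalars_mem]
    exact Ideal.mul_mem_left _ _ (Ideal.subset_span (by simp))
  · refine Submodule.mem_sup_right (Submodule.subset_span
      ⟨X 0 ^ b * X 1 ^ 1 * X 2 ^ 0 * X 3 ^ 0, X 0 ^ 0 * X 1 ^ 1 * X 2 ^ 0 * X 3 ^ 0,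
        by ring, ?_, ?_, ?_⟩)
    · refine hinvm b 1 0 0 ?_
      rw [show b + a * 1 + (m - 1) * 0 = m by omega, hζ1]
    · simp
    · refine hwta 0 1 0 0 ?_
      norm_num
  · refine Submodule.mem_sup_right (Submodule.subset_span
      ⟨X 0 ^ b * X 1 ^ 0 * X 2 ^ b * X 3 ^ 0, X 0 ^ 0 * X 1 ^ 0 * X 2 ^ b * X 3 ^ 0,
        by ring, ?_, ?_, ?_⟩)
    · refine hinvm b 0 b 0 ?_
      have h1 : (m - 1) * b = m * b - b := by rw [Nat.sub_one_mul]
      have h2 : b ≤ m * b := Nat.le_mul_of_pos_left _ hm0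
      rw [show b + a * 0 + (m - 1) * b = m * b by omega, pow_mul, hζ1, one_pow]
    · simp [show b ≠ 0 by omega]
    · refine hwta 0 0 b 0 ?_
      refine hzeq _ _ ?_
      push_cast [Nat.cast_sub hm1]
      linear_combination (b : ZMod m) * hmz - habz
  · -- the δ part
    have hδsum : X 0 ^ b * δ = ∑ d ∈ δ.support, coeff d δ • (X 0 ^ b * monomial d 1) := by
      conv_lhs => rw [δ.as_sum, Finset.mul_sum]
      refine Finset.sum_congr rfl fun d _ => ?_
      rw [smul_eq_C_mul, show (monomial d) (coeff d δ) = C (coeff d δ) * monomial d 1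
        by rw [C_mul_monomial, mul_one]]
      ring
    rw [hδsum]
    refine Submodule.sum_mem _ fun d hd => Submodule.smul_mem _ _ (Submodule.mem_sup_right ?_)
    have hWz := hδwtd d hd
    have hdeg := aux_deg _ δ hδ d hd
    have hf : X 0 ^ b * monomial d (1 : ℂ)
        = X 0 ^ (b + d 0) * X 1 ^ d 1 * X 2 ^ d 2 * X 3 ^ d 3 := by
      rw [hmonX d, pow_add]; ring
    rw [hf]
    rcases Nat.eq_zero_or_pos (d 3) with h3 | h3
    case inr =>
      obtain ⟨l, hl⟩ : ∃ l, d 3 = l + 1 := ⟨d 3 - 1, by omega⟩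
      refine Submodule.subset_span
        ⟨X 0 ^ 0 * X 1 ^ 0 * X 2 ^ 0 * X 3 ^ 1,
         X 0 ^ (b + d 0) * X 1 ^ d 1 * X 2 ^ d 2 * X 3 ^ l, ?_, ?_, ?_, ?_⟩
      · rw [hl]; ring
      · exact hinvm 0 0 0 1 (by norm_num)
      · simp
      · refine hwta _ _ _ _ (hzeq _ _ ?_)
        push_cast [Nat.cast_sub hm1] at hWz ⊢
        linear_combination hWz + habz
    rcases Nat.eq_zero_or_pos (d 2) with h2 | h2
    case inr =>
      obtain ⟨k, hk⟩ : ∃ k, d 2 = k + 1 := ⟨d 2 - 1, by omega⟩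
      obtain ⟨b0, hb0⟩ : ∃ b0, b = b0 + 1 := ⟨b - 1, by omega⟩
      refine Submodule.subset_span
        ⟨X 0 ^ 1 * X 1 ^ 0 * X 2 ^ 1 * X 3 ^ 0,
         X 0 ^ (b0 + d 0) * X 1 ^ d 1 * X 2 ^ k * X 3 ^ 0, ?_, ?_, ?_, ?_⟩
      · rw [h3, hk, hb0]; ring
      · refine hinvm 1 0 1 0 ?_
        rw [show 1 + a * 0 + (m - 1) * 1 = m by omega, hζ1]
      · simp
      · refine hwta _ _ _ _ (hzeq _ _ ?_)
        rw [hk] at hWz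
        rw [hb0] at habz
        push_cast [Nat.cast_sub hm1] at hWz habz ⊢
        linear_combination hWz + habz - hmz
    rcases Nat.eq_zero_or_pos (d 1) with h1 | h1
    case inr =>
      obtain ⟨j, hj⟩ : ∃ j, d 1 = j + 1 := ⟨d 1 - 1, by omega⟩
      refine Submodule.subset_span
        ⟨X 0 ^ b * X 1 ^ 1 * X 2 ^ 0 * X 3 ^ 0,
         X 0 ^ d 0 * X 1 ^ j * X 2 ^ 0 * X 3 ^ 0, ?_, ?_, ?_, ?_⟩
      · rw [h3, h2, hj]; ring
      · refine hinvm b 1 0 0 ?_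
        rw [show b + a * 1 + (m - 1) * 0 = m by omega, hζ1]
      · simp
      · refine hwta _ _ _ _ (hzeq _ _ ?_)
        rw [hj, h2] at hWz
        push_cast [Nat.cast_sub hm1] at hWz ⊢
        linear_combination hWz
    -- case d1 = d2 = d3 = 0
    rw [h1, h2] at hWz
    have hmod : d 0 ≡ 2 * a [MOD m] := by
      refine (ZMod.natCast_eq_natCast_iff _ _ _).mp ?_
      simpa using hWz
    have hd0 : 2 * a ≤ d 0 := by
      by_contra hc
      push_neg at hc
      have hdvd : (m : ℤ) ∣ (2 * a : ℕ) - (d 0 : ℤ) := by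
        have := (Nat.modEq_iff_dvd (n := m)).mp hmod
        exact_mod_cast this
      have hpos : (0 : ℤ) < (2 * a : ℕ) - (d 0 : ℤ) := by
        push_cast; omega
      have := Int.le_of_dvd hpos hdvd
      rw [h1, h2, h3] at hdeg
      omega
    obtain ⟨t, ht⟩ : ∃ t, d 0 = 2 * a + t := ⟨d 0 - 2 * a, by omega⟩
    refine Submodule.subset_span
      ⟨X 0 ^ m * X 1 ^ 0 * X 2 ^ 0 * X 3 ^ 0,
       X 0 ^ (a + t) * X 1 ^ 0 * X 2 ^ 0 * X 3 ^ 0, ?_, ?_, ?_, ?_⟩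
    · rw [h1, h2, h3, ht, show b + (2 * a + t) = m + (a + t) by omega, pow_add]; ring
    · refine hinvm m 0 0 0 ?_
      rw [show m + a * 0 + (m - 1) * 0 = m by omega, hζ1]
    · simp [hm0.ne']
    · refine hwta _ _ _ _ (hzeq _ _ ?_)
      rw [ht] at hWz
      push_cast at hWz ⊢
      linear_combination hWz
end
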